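/- Let B₃ : ℕ → ℕ → ℕ → ℕ satisfy: B₃(1,0,0)=1; for all n>1 and k+l<n, B₃(n,k,l)=∑_{i=0}^{k}∑_{j=0}^{l} B₃(n−1,i,j); and B₃(n,k,l)=0 whenever k+l≥n. Define B'₃(n,k,l) = binom(n+k−1,k)·binom(n+l−1,l)·(n−k−l)/n ∈ ℚ for n≥1 and k,l≥0. Then for all n≥1 and k,l≥0 with k+l<n, B₃(n,k,l) = B'₃(n,k,l) (as rational numbers). -/

import Mathlib

/-!
Induction on `n`. For `k + l < n + 1` the recursion sums `B₃ n i j` over the rectangle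
`i ≤ k, j ≤ l`, which lies in `i + j ≤ n`; there `B₃ n i j = B'₃(n, i, j)`, on the edge `i + j = n`
because both sides vanish. The summand `a i * a j * (n - i - j) / n`, with
`a i = binom(n + i - 1, i)`, separates, so the double sum only needs `∑ a i = binom(n + k, k)`
(hockey stick) and `(n + 1) * ∑ i * a i = n * k * binom(n + k, k)`.
-/

open Finset

def fussCatalanTetra (n k l : ℕ) : ℚ :=
  (n + k - 1).choose k * (n + l - 1).choose l * ((n : ℚ) - k - l) / n

lemma fussCatalanTetra_succ (m k l : ℕ) :
    fussCatalanTetra (m + 1) k l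
      = (m + k).choose k * (m + l).choose l * ((m + 1 : ℚ) - k - l) / (m + 1) := by
  simp [fussCatalanTetra, Nat.add_right_comm m 1]

lemma fussCatalanTetra_of_add_eq {n k l : ℕ} (h : k + l = n) : fussCatalanTetra n k l = 0 := by
  subst h
  simp [fussCatalanTetra]

lemma sum_range_choose_add_self (m k : ℕ) :
    ∑ i ∈ range (k + 1), ((m + i).choose i : ℚ) = (m + k + 1).choose k := by
  have h : ∑ i ∈ range (k + 1), (m + i).choose i = (m + k + 1).choose k := calc
    _ = ∑ i ∈ range (k + 1), (i + m).choose m := by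
      refine sum_congr rfl fun i _ => ?_
      rw [← Nat.choose_symm_add, add_comm]
    _ = (k + m + 1).choose (m + 1) := Nat.sum_range_add_choose k m
    _ = (m + k + 1).choose k := by
      rw [show k + m + 1 = m + 1 + k by omega, Nat.choose_symm_add, Nat.add_right_comm]
  exact_mod_cast h

lemma sum_range_mul_choose_add_self (m k : ℕ) :
    (m + 2 : ℚ) * ∑ i ∈ range (k + 1), (i : ℚ) * (m + i).choose i
      = (m + 1) * k * (m + k + 1).choose k := by
  induction k with
  | zero => simp
  | succ k ih =>
    have pascal : ((m + k + 2).choose (k + 1) : ℚ)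
        = (m + k + 1).choose k + (m + k + 1).choose (k + 1) := by
      exact_mod_cast Nat.choose_succ_succ' (m + k + 1) k
    have absorb : ((m + k + 1).choose (k + 1) : ℚ) * (k + 1) = (m + k + 1).choose k * (m + 1) := by
      have h := Nat.choose_succ_right_eq (m + k + 1) k
      rw [show m + k + 1 - k = m + 1 by omega] at h
      exact_mod_cast h
    rw [sum_range_succ, mul_add, ih, ← add_assoc m k 1]
    push_cast
    linear_combination absorb - ((m : ℚ) + 1) * (k + 1) * pascal

lemma sum_sum_choose_mul_choose_mul (m k l : ℕ) :
    ∑ i ∈ range (k + 1), ∑ j ∈ range (l + 1),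
        ((m + i).choose i : ℚ) * (m + j).choose j * ((m + 1 : ℚ) - i - j)
      = (m + 1) / (m + 2) * (m + k + 1).choose k * (m + l + 1).choose l
          * ((m + 2 : ℚ) - k - l) := by
  set a : ℕ → ℚ := fun i => (m + i).choose i
  have separate :
      ∑ i ∈ range (k + 1), ∑ j ∈ range (l + 1), a i * a j * ((m + 1 : ℚ) - i - j)
        = (m + 1) * ((∑ i ∈ range (k + 1), a i) * (∑ j ∈ range (l + 1), a j))
          - (∑ i ∈ range (k + 1), (i : ℚ) * a i) * (∑ j ∈ range (l + 1), a j)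
          - (∑ i ∈ range (k + 1), a i) * (∑ j ∈ range (l + 1), (j : ℚ) * a j) := by
    rw [sum_mul_sum, sum_mul_sum, sum_mul_sum]
    simp only [mul_sum, ← sum_sub_distrib]
    exact sum_congr rfl fun i _ => sum_congr rfl fun j _ => by ring
  have hk := sum_range_mul_choose_add_self m k
  have hl := sum_range_mul_choose_add_self m l
  have hm : (m + 2 : ℚ) ≠ 0 := by positivity
  rw [separate, sum_range_choose_add_self, sum_range_choose_add_self]
  field_simp
  linear_combination (-(m + l + 1).choose l : ℚ) * hk - ((m + k + 1).choose k : ℚ) * hl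

lemma fussCatalanTetra_add_two (m k l : ℕ) :
    fussCatalanTetra (m + 2) k l
      = ∑ i ∈ range (k + 1), ∑ j ∈ range (l + 1), fussCatalanTetra (m + 1) i j := by
  simp only [fussCatalanTetra_succ, ← sum_div]
  rw [sum_sum_choose_mul_choose_mul, Nat.add_right_comm m 1 k, Nat.add_right_comm m 1 l]
  push_cast
  field_simp
  ring

/-- In the range `k + l < n` (with `n ≥ 1`), the integers `B₃ n k l`
agree with the rational numbers `B'₃(n,k,l) = binom(n+k-1,k)·binom(n+l-1,l)·(n-k-l)/n`. -/
theorem fuss_catalan_tetrahedron_eq_redundant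
    (B₃ : ℕ → ℕ → ℕ → ℕ)
    (hB1 : B₃ 1 0 0 = 1)
    (hrec : ∀ n k l, 1 < n → k + l < n →
      B₃ n k l = ∑ i ∈ Finset.range (k + 1), ∑ j ∈ Finset.range (l + 1), B₃ (n - 1) i j)
    (hzero : ∀ n k l, n ≤ k + l → B₃ n k l = 0) :
    ∀ n k l : ℕ, 1 ≤ n → k + l < n →
      (B₃ n k l : ℚ)
        = (Nat.choose (n + k - 1) k : ℚ) * (Nat.choose (n + l - 1) l : ℚ)
            * ((n : ℚ) - (k : ℚ) - (l : ℚ)) / (n : ℚ) := by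
  intro n k l hn hkl
  show _ = fussCatalanTetra n k l
  induction n, hn using Nat.le_induction generalizing k l with
  | base =>
    obtain ⟨rfl, rfl⟩ : k = 0 ∧ l = 0 := by omega
    simp [hB1, fussCatalanTetra]
  | succ n hn ih =>
    obtain ⟨m, rfl⟩ : ∃ m, n = m + 1 := ⟨n - 1, by omega⟩
    have below : ∀ i j, i + j ≤ m + 1 →
        (B₃ (m + 1) i j : ℚ) = fussCatalanTetra (m + 1) i j := by
      intro i j hij
      obtain hij | hij := hij.lt_or_eq
      · exact ih i j hij
      · rw [hzero _ _ _ hij.ge, fussCatalanTetra_of_add_eq hij, Nat.cast_zero]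
    rw [hrec _ k l (by omega) hkl, fussCatalanTetra_add_two]
    push_cast
    refine sum_congr rfl fun i hi => sum_congr rfl fun j hj => below i j ?_
    rw [mem_range] at hi hj
    omega
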